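/- arXiv:2006.13787 — 2 statements merged into one kernel-verified Lean document; each statement's English description precedes it below -/
import Mathlib

section
/- Let S be an inverse semigroup with zero, K a field, and a ∈ K₀S a non-singular element with magic element t. If e and f are idempotents of S (or the adjoined identity 1) such that e t f ≠ 0, then e a f is non-singular and e t f is magic for e a f. -/
/-! The coefficients of `e a f` are those of `a`, moved along `s ↦ e s f` (coefficients
landing on `0` are discarded). If `0 ≠ u ≤ e t f` then `e u = u = u f`, and this forces
`u ≤ e s f ↔ u ≤ s` for every `s`; hence the sum of the coefficients of `e a f` above `u`
equals that of `a`, which is non-zero because `u ≤ e t f ≤ t`. The order-theoretic facts come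
from the descriptions `u ≤ s ↔ u = s g ↔ u = g s` with `g` idempotent, which rest on the
classical fact that idempotents of an inverse semigroup commute. -/

/-- An inverse semigroup with zero. -/
class InverseSemigroup0 (S : Type*) extends Semigroup S, Zero S, Star S where
  zero_mul : ∀ s : S, 0 * s = 0
  mul_zero : ∀ s : S, s * 0 = 0
  mul_star_mul_self : ∀ s : S, s * star s * s = s
  star_mul_self_star : ∀ s : S, star s * s * star s = star s
  star_unique : ∀ s t : S, s * t * s = s → t * s * t = t → t = star s

/-- The natural partial order on an inverse semigroup. -/
def NatLe {S : Type*} [InverseSemigroup0 S] (a b : S) : Prop := a = b * star a * a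

variable (K S : Type*) [CommRing K] [InverseSemigroup0 S]

/-- The ring congruence on the semigroup algebra identifying the zero of `S`
with the zero of the algebra. -/
noncomputable def contractedCon : RingCon (MonoidAlgebra K S) :=
  ringConGen (fun a b => a = MonoidAlgebra.single (0 : S) (1 : K) ∧ b = 0)

/-- The contracted semigroup algebra `K₀S`: the `K`-algebra with basis `S \ {0}`
and multiplication extending that of `S`, realized as the quotient of the semigroup
algebra of `S` by the span of the zero of `S`. -/
abbrev Kzero := (contractedCon K S).Quotient

/-- The quotient map onto the contracted semigroup algebra. -/
noncomputable def mk0 (a : MonoidAlgebra K S) : Kzero K S :=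
  (a : (contractedCon K S).Quotient)

/-- The canonical map `S → K₀S`. -/
noncomputable def iota (s : S) : Kzero K S := mk0 K S (MonoidAlgebra.single s 1)

/-- An element of `K₀S` is singular if for every non-zero idempotent `e` there is a
non-zero idempotent `f ≤ e` with `a f = 0`. -/
noncomputable def Singular (x : Kzero K S) : Prop :=
  ∀ e : S, IsIdempotentElem e → e ≠ 0 →
    ∃ f : S, IsIdempotentElem f ∧ f ≠ 0 ∧ NatLe f e ∧ x * iota K S f = 0

/-- `J` is a two-sided ideal of the (non-unital) ring `K₀S`. -/
def IsIdealSet (J : Set (Kzero K S)) : Prop :=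
  (0 : Kzero K S) ∈ J ∧ (∀ a ∈ J, ∀ b ∈ J, a + b ∈ J) ∧ (∀ a ∈ J, -a ∈ J) ∧
    ∀ a ∈ J, ∀ x : Kzero K S, x * a ∈ J ∧ a * x ∈ J

open Classical in
/-- `t` is a magic element for the non-singular element with coefficient function `b`:
`t ≠ 0` and for all non-zero `u ≤ t` the sum `Σ_{s ≥ u} b_s` is non-zero. -/
noncomputable def Magic {K S : Type*} [CommRing K] [InverseSemigroup0 S]
    (b : S →₀ K) (t : S) : Prop :=
  t ≠ 0 ∧ ∀ u : S, u ≠ 0 → NatLe u t →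
    (∑ s ∈ b.support.filter fun s => NatLe u s, b s) ≠ 0

/-- Multiplication on the left by an element of `S` or by the adjoined identity
(encoded by `none`). -/
def lOpt {S : Type*} [InverseSemigroup0 S] : Option S → S → S
  | none, s => s
  | some x, s => x * s

/-- Multiplication on the right by an element of `S` or by the adjoined identity. -/
def rOpt {S : Type*} [InverseSemigroup0 S] : S → Option S → S
  | s, none => s
  | s, some y => s * y

/-- The product `e s f` in `S` with an adjoined identity. -/
def conjOpt {S : Type*} [InverseSemigroup0 S] (e : Option S) (s : S) (f : Option S) : S :=
  rOpt (lOpt e s) f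

/-- The coefficient function of `e a f` in `K₀S`, where `a` has coefficient
function `b`. -/
noncomputable def conjCoeff {K S : Type*} [CommRing K] [InverseSemigroup0 S]
    (e : Option S) (b : S →₀ K) (f : Option S) : S →₀ K :=
  Finsupp.erase 0 (b.sum fun s c => Finsupp.single (conjOpt e s f) c)

theorem IsIdempotentElem.mul_mul_self_left {M : Type*} [Semigroup M] {e : M}
    (he : IsIdempotentElem e) (a : M) : e * (e * a) = e * a := by
  rw [← mul_assoc, he.eq]

theorem Finsupp.sum_filter_erase {α M : Type*} [AddCommMonoid M] [DecidableEq α]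
    (d : α →₀ M) {p : α → Prop} [DecidablePred p] {z : α} (hz : ¬p z) :
    ∑ y ∈ (d.erase z).support.filter p, d.erase z y = ∑ y ∈ d.support.filter p, d y := by
  rw [Finsupp.support_erase, Finset.filter_erase,
    Finset.erase_eq_of_notMem (fun h => hz (Finset.mem_filter.mp h).2)]
  exact Finset.sum_congr rfl fun y hy =>
    Finsupp.erase_ne fun hyz => hz (hyz ▸ (Finset.mem_filter.mp hy).2)

theorem Finsupp.sum_filter_mapDomain {α β M : Type*} [AddCommMonoid M] [DecidableEq β]
    (φ : α → β) (d : α →₀ M) (p : β → Prop) [DecidablePred p] :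
    ∑ y ∈ (d.mapDomain φ).support.filter p, d.mapDomain φ y =
      ∑ x ∈ d.support.filter (fun x => p (φ x)), d x := by
  rw [Finset.sum_filter, Finset.sum_filter]
  exact Finsupp.sum_mapDomain_index (h := fun y c => if p y then c else 0) (fun _ => ite_self 0)
    (fun _ _ _ => by split_ifs <;> simp)

namespace InverseSemigroup0

variable {S}
variable {e f s u w : S}

theorem star_eq_self_of_isIdempotentElem (he : IsIdempotentElem e) : star e = e := by
  have h : e * e * e = e := by rw [he.eq, he.eq]
  exact (star_unique e e h h).symm

protected theorem star_star (s : S) : star (star s) = s :=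
  (star_unique (star s) s (star_mul_self_star s) (mul_star_mul_self s)).symm

theorem isIdempotentElem_star_mul_self (s : S) : IsIdempotentElem (star s * s) := by
  rw [IsIdempotentElem, ← mul_assoc, star_mul_self_star]

theorem isIdempotentElem_mul_star_self (s : S) : IsIdempotentElem (s * star s) := by
  rw [IsIdempotentElem, ← mul_assoc, mul_star_mul_self]

theorem isIdempotentElem_mul (he : IsIdempotentElem e) (hf : IsIdempotentElem f) :
    IsIdempotentElem (e * f) := by
  have hx : f * star (e * f) * e = star (e * f) := by
    refine star_unique (e * f) _ ?_ ?_
    · calc e * f * (f * star (e * f) * e) * (e * f) = e * f * star (e * f) * (e * f) := by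
            simp only [mul_assoc, he.mul_mul_self_left, hf.mul_mul_self_left]
        _ = e * f := mul_star_mul_self _
    · calc f * star (e * f) * e * (e * f) * (f * star (e * f) * e)
            = f * (star (e * f) * (e * f) * star (e * f)) * e := by
            simp only [mul_assoc, he.mul_mul_self_left, hf.mul_mul_self_left]
        _ = f * star (e * f) * e := by rw [star_mul_self_star, mul_assoc]
  have hxx : IsIdempotentElem (star (e * f)) := by
    calc star (e * f) * star (e * f) = f * (star (e * f) * (e * f) * star (e * f)) * e := by
          conv_lhs => rw [← hx]
          simp only [mul_assoc]
      _ = star (e * f) := by rw [star_mul_self_star, hx]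
  rwa [← InverseSemigroup0.star_star (e * f), star_eq_self_of_isIdempotentElem hxx]

theorem commute_of_isIdempotentElem (he : IsIdempotentElem e) (hf : IsIdempotentElem f) :
    Commute e f := by
  have hef := isIdempotentElem_mul he hf
  have h : f * e = star (e * f) := by
    refine star_unique (e * f) _ ?_ ?_
    · calc e * f * (f * e) * (e * f) = (e * f) * (e * f) := by
            simp only [mul_assoc, he.mul_mul_self_left, hf.mul_mul_self_left]
        _ = e * f := hef.eq
    · calc f * e * (e * f) * (f * e) = (f * e) * (f * e) := by
            simp only [mul_assoc, he.mul_mul_self_left, hf.mul_mul_self_left]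
        _ = f * e := (isIdempotentElem_mul hf he).eq
  rw [Commute, SemiconjBy, h, star_eq_self_of_isIdempotentElem hef]

protected theorem star_mul (s w : S) : star (s * w) = star w * star s := by
  have hc := commute_of_isIdempotentElem (isIdempotentElem_star_mul_self s)
    (isIdempotentElem_mul_star_self w)
  refine (star_unique (s * w) _ ?_ ?_).symm
  · calc s * w * (star w * star s) * (s * w) = s * ((w * star w) * (star s * s)) * w := by
          simp only [mul_assoc]
      _ = s * star s * s * (w * star w * w) := by rw [← hc.eq]; simp only [mul_assoc]
      _ = s * w := by rw [mul_star_mul_self, mul_star_mul_self]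
  · calc star w * star s * (s * w) * (star w * star s)
          = star w * ((star s * s) * (w * star w)) * star s := by simp only [mul_assoc]
      _ = star w * w * star w * (star s * s * star s) := by rw [hc.eq]; simp only [mul_assoc]
      _ = star w * star s := by rw [star_mul_self_star, star_mul_self_star]

end InverseSemigroup0

section NaturalPartialOrder

open InverseSemigroup0

variable {S}
variable {e f s u w : S}

theorem natLe_iff_exists_mul_right :
    NatLe u s ↔ ∃ g, IsIdempotentElem g ∧ u = s * g := by
  refine ⟨fun h => ⟨star u * u, isIdempotentElem_star_mul_self u, by rwa [← mul_assoc]⟩, ?_⟩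
  rintro ⟨g, hg, rfl⟩
  have hc := commute_of_isIdempotentElem hg (isIdempotentElem_star_mul_self s)
  calc s * g = s * star s * s * (g * g) := by rw [mul_star_mul_self, hg.eq]
    _ = s * (g * (star s * s)) * g := by rw [hc.eq]; simp only [mul_assoc]
    _ = s * star (s * g) * (s * g) := by
        rw [InverseSemigroup0.star_mul, star_eq_self_of_isIdempotentElem hg]; simp only [mul_assoc]

theorem natLe_iff_exists_mul_left :
    NatLe u s ↔ ∃ g, IsIdempotentElem g ∧ u = g * s := by
  rw [natLe_iff_exists_mul_right]
  constructor
  · rintro ⟨g, hg, rfl⟩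
    have hc := commute_of_isIdempotentElem hg (isIdempotentElem_star_mul_self s)
    refine ⟨s * g * star (s * g), isIdempotentElem_mul_star_self _, ?_⟩
    calc s * g = s * star s * s * g := by rw [mul_star_mul_self]
      _ = s * (g * (star s * s)) := by rw [hc.eq]; simp only [mul_assoc]
      _ = s * g * (g * star s) * s := by simp only [mul_assoc, hg.mul_mul_self_left]
      _ = s * g * star (s * g) * s := by
          rw [InverseSemigroup0.star_mul, star_eq_self_of_isIdempotentElem hg]
  · rintro ⟨g, hg, rfl⟩
    have hc := commute_of_isIdempotentElem hg (isIdempotentElem_mul_star_self s)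
    refine ⟨star s * g * s, ?_, ?_⟩
    · calc star s * g * s * (star s * g * s) = star s * (g * (s * star s) * g) * s := by
            simp only [mul_assoc]
        _ = star s * s * star s * (g * g) * s := by rw [hc.eq]; simp only [mul_assoc]
        _ = star s * g * s := by rw [star_mul_self_star, hg.eq]
    · calc g * s = g * (s * star s * s) := by rw [mul_star_mul_self]
        _ = s * star s * g * s := by rw [← hc.eq]; simp only [mul_assoc]
        _ = s * (star s * g * s) := by simp only [mul_assoc]

theorem natLe_refl (s : S) : NatLe s s := (mul_star_mul_self s).symm

theorem NatLe.trans {v : S} (h₁ : NatLe u w) (h₂ : NatLe w v) : NatLe u v := by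
  obtain ⟨g, hg, rfl⟩ := natLe_iff_exists_mul_right.mp h₁
  obtain ⟨g', hg', rfl⟩ := natLe_iff_exists_mul_right.mp h₂
  exact natLe_iff_exists_mul_right.mpr ⟨g' * g,
    IsIdempotentElem.mul_of_commute (commute_of_isIdempotentElem hg' hg) hg' hg, mul_assoc _ _ _⟩

theorem eq_zero_of_natLe_zero (h : NatLe u 0) : u = 0 := by
  rw [h, InverseSemigroup0.zero_mul, InverseSemigroup0.zero_mul]

theorem natLe_mul_left (he : IsIdempotentElem e) (s : S) : NatLe (e * s) s :=
  natLe_iff_exists_mul_left.mpr ⟨e, he, rfl⟩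

theorem natLe_mul_right (hf : IsIdempotentElem f) (s : S) : NatLe (s * f) s :=
  natLe_iff_exists_mul_right.mpr ⟨f, hf, rfl⟩

theorem mul_eq_self_of_natLe_mul_left (he : IsIdempotentElem e) (h : NatLe u (e * w)) :
    e * u = u := by
  obtain ⟨g, -, rfl⟩ := natLe_iff_exists_mul_right.mp h
  simp only [mul_assoc, he.mul_mul_self_left]

theorem mul_eq_self_of_natLe_mul_right (hf : IsIdempotentElem f) (h : NatLe u (w * f)) :
    u * f = u := by
  obtain ⟨g, -, rfl⟩ := natLe_iff_exists_mul_left.mp h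
  simp only [mul_assoc, hf.eq]

theorem NatLe.mul_left (hu : e * u = u) (h : NatLe u s) : NatLe u (e * s) := by
  calc u = e * (s * star u * u) := by rw [← h, hu]
    _ = e * s * star u * u := by simp only [mul_assoc]

theorem NatLe.mul_right (hu : u * f = u) (h : NatLe u s) : NatLe u (s * f) := by
  obtain ⟨g, hg, hgs⟩ := natLe_iff_exists_mul_left.mp h
  exact natLe_iff_exists_mul_left.mpr ⟨g, hg, by rw [← mul_assoc, ← hgs, hu]⟩

end NaturalPartialOrder

section AdjoinedIdentity

variable {S}
variable {e f : Option S} {s t u w : S}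

theorem lOpt_rOpt (e : Option S) (s : S) (f : Option S) :
    lOpt e (rOpt s f) = rOpt (lOpt e s) f := by
  cases e <;> cases f <;> simp only [lOpt, rOpt, mul_assoc]

theorem natLe_lOpt (he : ∀ x ∈ e, IsIdempotentElem x) (s : S) : NatLe (lOpt e s) s := by
  cases e with
  | none => exact natLe_refl s
  | some x => exact natLe_mul_left (he x rfl) s

theorem natLe_rOpt (hf : ∀ x ∈ f, IsIdempotentElem x) (s : S) : NatLe (rOpt s f) s := by
  cases f with
  | none => exact natLe_refl s
  | some x => exact natLe_mul_right (hf x rfl) s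

theorem lOpt_eq_self_of_natLe (he : ∀ x ∈ e, IsIdempotentElem x) (h : NatLe u (lOpt e w)) :
    lOpt e u = u := by
  cases e with
  | none => rfl
  | some x => exact mul_eq_self_of_natLe_mul_left (he x rfl) h

theorem rOpt_eq_self_of_natLe (hf : ∀ x ∈ f, IsIdempotentElem x) (h : NatLe u (rOpt w f)) :
    rOpt u f = u := by
  cases f with
  | none => rfl
  | some x => exact mul_eq_self_of_natLe_mul_right (hf x rfl) h

theorem NatLe.lOpt (hu : lOpt e u = u) (h : NatLe u s) : NatLe u (lOpt e s) := by
  cases e with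
  | none => exact h
  | some x => exact h.mul_left hu

theorem NatLe.rOpt (hu : rOpt u f = u) (h : NatLe u s) : NatLe u (rOpt s f) := by
  cases f with
  | none => exact h
  | some x => exact h.mul_right hu

theorem natLe_conjOpt (he : ∀ x ∈ e, IsIdempotentElem x) (hf : ∀ x ∈ f, IsIdempotentElem x)
    (s : S) : NatLe (conjOpt e s f) s :=
  (natLe_rOpt hf _).trans (natLe_lOpt he s)

theorem natLe_conjOpt_iff (he : ∀ x ∈ e, IsIdempotentElem x)
    (hf : ∀ x ∈ f, IsIdempotentElem x) (hu : NatLe u (conjOpt e t f)) :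
    NatLe u (conjOpt e s f) ↔ NatLe u s := by
  refine ⟨fun h => h.trans (natLe_conjOpt he hf s), fun h => ?_⟩
  have hu' : NatLe u (lOpt e (rOpt t f)) := by rwa [lOpt_rOpt]
  exact (h.lOpt (lOpt_eq_self_of_natLe he hu')).rOpt (rOpt_eq_self_of_natLe hf hu)

end AdjoinedIdentity

theorem stmt11_general {K S : Type*} [Field K] [InverseSemigroup0 S]
    (b : S →₀ K) (t : S) (hmagic : Magic b t)
    (e f : Option S)
    (he : ∀ x ∈ e, IsIdempotentElem x) (hf : ∀ x ∈ f, IsIdempotentElem x)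
    (hetf : conjOpt e t f ≠ 0) :
    Magic (conjCoeff e b f) (conjOpt e t f) := by
  classical
  refine ⟨hetf, fun u hu hle => ?_⟩
  have hconj : conjCoeff e b f = (b.mapDomain fun s => conjOpt e s f).erase 0 := rfl
  rw [hconj, Finsupp.sum_filter_erase _ fun h => hu (eq_zero_of_natLe_zero h),
    Finsupp.sum_filter_mapDomain]
  simp_rw [natLe_conjOpt_iff he hf hle]
  exact hmagic.2 u hu (hle.trans (natLe_conjOpt he hf t))

/-- If `a ∈ K₀S` is non-singular with magic element `t`, and `e, f` are idempotents of
`S` or the adjoined identity such that `e t f ≠ 0`, then `e a f` is non-singular with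
magic element `e t f`. -/
theorem stmt11 {K S : Type*} [Field K] [InverseSemigroup0 S]
    (b : S →₀ K) (hb0 : b 0 = 0) (t : S) (hmagic : Magic b t)
    (e f : Option S)
    (he : ∀ x ∈ e, IsIdempotentElem x) (hf : ∀ x ∈ f, IsIdempotentElem x)
    (hetf : conjOpt e t f ≠ 0) :
    Magic (conjCoeff e b f) (conjOpt e t f) :=
  stmt11_general b t hmagic e f he hf hetf
end

section
/- Let G be a group with a self-similar action on X* (X an alphabet with at least two letters), M = X*G the associated Zappa–Szép product monoid, S the inverse hull of M, and K a commutative ring. Write a ∈ KM uniquely as a = Σ_{w ∈ X*} w a_w with a_w ∈ KG. Then for u ∈ X*: a u = 0 if and only if a_w u = 0 for all w. Consequently a is singular in K₀S if and only if every a_w is singular in K₀S. -/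
/-- A self-similar action of a group `G` on the free monoid on the alphabet `X`:
an action on letters together with restrictions `g|_x`, satisfying the self-similarity
axioms. -/
structure SelfSimilarAction (G X : Type*) [Group G] where
  act : G → X → X
  res : G → X → G
  act_one : ∀ x, act 1 x = x
  act_mul : ∀ g h x, act (g * h) x = act g (act h x)
  res_one : ∀ x, res 1 x = 1
  res_mul : ∀ g h x, res (g * h) x = res g (act h x) * res h x

namespace SelfSimilarAction

variable {G X : Type*} [Group G] (σ : SelfSimilarAction G X)

/-- The induced action of `g ∈ G` on finite words. -/
def actW (g : G) : List X → List X
  | [] => []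
  | x :: u => σ.act g x :: actW (σ.res g x) u

/-- The restriction `g|_w` of `g ∈ G` at a finite word `w`. -/
def resW (g : G) : List X → G
  | [] => g
  | x :: u => resW (σ.res g x) u

/-- A word `w` is strongly fixed by `g` if `g(w) = w` and `g|_w = 1`. -/
def SFix (g : G) (w : List X) : Prop := σ.actW g w = w ∧ σ.resW g w = 1

/-- The self-similar action is faithful: `G` acts faithfully on `X*`. -/
def Faithful : Prop := ∀ g : G, (∀ w : List X, σ.actW g w = w) → g = 1

end SelfSimilarAction

namespace SelfSimilarAction

variable {G X : Type*} [Group G] (σ : SelfSimilarAction G X)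

/-- The multiplication of the Zappa–Szép product monoid `M = X* G`:
`(u g)(v h) = (u g(v)) (g|_v h)`. -/
def mulM (m n : List X × G) : List X × G :=
  (m.1 ++ σ.actW m.2 n.1, σ.resW m.2 n.1 * n.2)

variable {K : Type*} [CommRing K]

/-- Right multiplication of an element of the monoid algebra `KM` by an element of
`M = X* G`. -/
noncomputable def rconv (a : (List X × G) →₀ K) (m : List X × G) : (List X × G) →₀ K :=
  a.sum fun n c => Finsupp.single (σ.mulM n m) c

/-- The `KG`-component `a_w` of `a ∈ KM` in the decomposition `a = Σ_{w ∈ X*} w a_w`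
of `KM` as a free right `KG`-module with basis `X*`. -/
noncomputable def gComp (a : (List X × G) →₀ K) (w : List X) : G →₀ K :=
  Finsupp.comapDomain (fun g => (w, g)) a
    (Set.injOn_of_injective (fun g h hq => congrArg Prod.snd hq))

/-- The embedding of `KG` into `KM`. -/
noncomputable def gEmb (c : G →₀ K) : (List X × G) →₀ K :=
  Finsupp.mapDomain (fun g => (([] : List X), g)) c

/-- `c ∈ KM ⊆ K₀S` is singular in the contracted algebra `K₀S` of the inverse hull `S`
of `M`: for each `u ∈ X*` there exists `v ∈ X*` with `c u v = 0`. -/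
noncomputable def SingularM (c : (List X × G) →₀ K) : Prop :=
  ∀ u : List X, ∃ v : List X, σ.rconv (σ.rconv c (u, 1)) (v, 1) = 0

end SelfSimilarAction

/-! Right multiplication by `(u, 1)` sends `(w, g)` to `(w ++ g(u), g|_u)`: it keeps the prefix `w`
and lengthens the word by exactly `|u|`. So the coefficient of `a u` at `w ++ v` with `|v| = |u|` is
the coefficient of `a_w u` at `v`, and `a_w u` lives on words of length `|u|`; hence `a u = 0` iff
every `a_w u = 0`. For singularity, only finitely many `a_w` are non-zero and an annihilating word
stays annihilating when extended on the right, so a single word `v` kills all the `a_w` at once. -/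

namespace SelfSimilarAction

section Components

variable {G X K : Type*} [CommRing K]

lemma gComp_apply (a : (List X × G) →₀ K) (w : List X) (g : G) : gComp a w g = a (w, g) := rfl

lemma gComp_add (a b : (List X × G) →₀ K) (w : List X) :
    gComp (a + b) w = gComp a w + gComp b w :=
  Finsupp.comapDomain_add_of_injective (Prod.mk_right_injective w) a b

lemma gComp_single_self (w : List X) (g : G) (c : K) :
    gComp (Finsupp.single (w, g) c) w = Finsupp.single g c :=
  Finsupp.comapDomain_single (Prod.mk w) g c _

lemma gComp_single_of_ne {w w' : List X} (hw : w' ≠ w) (g : G) (c : K) :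
    gComp (Finsupp.single (w', g) c) w = 0 := by
  ext g'
  simp [gComp_apply, hw]

lemma gComp_eq_zero_of_notMem [DecidableEq X] (a : (List X × G) →₀ K) {w : List X}
    (hw : w ∉ a.support.image Prod.fst) : gComp a w = 0 := by
  ext g
  by_contra hg
  exact hw (Finset.mem_image.mpr ⟨(w, g), Finsupp.mem_support_iff.mpr hg, rfl⟩)

end Components

variable {G X : Type*} [Group G] (σ : SelfSimilarAction G X)

lemma length_actW (g : G) (u : List X) : (σ.actW g u).length = u.length := by
  induction u generalizing g with
  | nil => rfl
  | cons x u ih => simp [actW, ih]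

lemma actW_append (g : G) (u v : List X) :
    σ.actW g (u ++ v) = σ.actW g u ++ σ.actW (σ.resW g u) v := by
  induction u generalizing g with
  | nil => rfl
  | cons x u ih => simp [actW, resW, ih]

lemma resW_append (g : G) (u v : List X) :
    σ.resW g (u ++ v) = σ.resW (σ.resW g u) v := by
  induction u generalizing g with
  | nil => rfl
  | cons x u ih => simp [resW, ih]

lemma mulM_mulM_word (n : List X × G) (u v : List X) :
    σ.mulM (σ.mulM n (u, 1)) (v, 1) = σ.mulM n (u ++ v, 1) := by
  simp [mulM, actW_append, resW_append]

lemma length_le_length_mulM_word (n : List X × G) (u : List X) :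
    u.length ≤ (σ.mulM n (u, 1)).1.length := by
  simp [mulM, length_actW]

lemma mulM_word_eq_append_iff {w w' v u : List X} (hv : v.length = u.length) (g h : G) :
    σ.mulM (w', g) (u, 1) = (w ++ v, h) ↔ w' = w ∧ σ.mulM ([], g) (u, 1) = (v, h) := by
  have hlen : (σ.actW g u).length = v.length := by rw [length_actW, hv]
  simp only [mulM, List.nil_append, Prod.mk.injEq]
  constructor
  · rintro ⟨hword, hres⟩
    exact ⟨(List.append_inj' hword hlen).1, (List.append_inj' hword hlen).2, hres⟩
  · rintro ⟨rfl, hword, hres⟩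
    exact ⟨by rw [hword], hres⟩

variable {K : Type*} [CommRing K]

lemma rconv_eq_mapDomain (a : (List X × G) →₀ K) (m : List X × G) :
    σ.rconv a m = Finsupp.mapDomain (σ.mulM · m) a := rfl

lemma rconv_add (a b : (List X × G) →₀ K) (m : List X × G) :
    σ.rconv (a + b) m = σ.rconv a m + σ.rconv b m :=
  Finsupp.mapDomain_add

lemma rconv_single (n : List X × G) (c : K) (m : List X × G) :
    σ.rconv (Finsupp.single n c) m = Finsupp.single (σ.mulM n m) c :=
  Finsupp.mapDomain_single

lemma rconv_gEmb (c : G →₀ K) (m : List X × G) :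
    σ.rconv (gEmb c) m = Finsupp.mapDomain (fun g => σ.mulM ([], g) m) c := by
  rw [rconv_eq_mapDomain, gEmb, ← Finsupp.mapDomain_comp]
  rfl

lemma rconv_rconv_word (a : (List X × G) →₀ K) (u v : List X) :
    σ.rconv (σ.rconv a (u, 1)) (v, 1) = σ.rconv a (u ++ v, 1) := by
  rw [rconv_eq_mapDomain, rconv_eq_mapDomain, rconv_eq_mapDomain, ← Finsupp.mapDomain_comp]
  exact Finsupp.mapDomain_congr fun n _ => σ.mulM_mulM_word n u v

lemma rconv_word_apply_eq_zero_of_length_lt (a : (List X × G) →₀ K) {u p : List X}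
    (hp : p.length < u.length) (h : G) : σ.rconv a (u, 1) (p, h) = 0 := by
  refine Finsupp.mapDomain_of_notMem_range a _ ?_
  rintro ⟨n, hn⟩
  have := σ.length_le_length_mulM_word n u
  simp only [hn] at this
  omega

lemma rconv_gEmb_word_apply_eq_zero_of_length_ne (c : G →₀ K) {u v : List X}
    (hv : v.length ≠ u.length) (h : G) : σ.rconv (gEmb c) (u, 1) (v, h) = 0 := by
  rw [rconv_gEmb]
  refine Finsupp.mapDomain_of_notMem_range c _ ?_
  rintro ⟨g, hg⟩
  simp only [mulM, List.nil_append, Prod.mk.injEq] at hg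
  exact hv (by rw [← hg.1, length_actW])

lemma rconv_gEmb_gComp_word_apply (a : (List X × G) →₀ K) (w : List X) {u v : List X}
    (hv : v.length = u.length) (h : G) :
    σ.rconv (gEmb (gComp a w)) (u, 1) (v, h) = σ.rconv a (u, 1) (w ++ v, h) := by
  classical
  induction a using Finsupp.induction_linear with
  | zero => simp [gEmb, gComp, rconv]
  | add a b ha hb =>
    rw [gComp_add, gEmb, Finsupp.mapDomain_add, rconv_add, rconv_add, Finsupp.add_apply,
      Finsupp.add_apply, ← ha, ← hb, gEmb, gEmb]
  | single n c =>
    obtain ⟨w', g⟩ := n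
    rw [rconv_single, Finsupp.single_apply]
    by_cases hw : w' = w
    · subst hw
      simp [gComp_single_self, rconv_gEmb, Finsupp.single_apply, σ.mulM_word_eq_append_iff hv]
    · simp [gComp_single_of_ne hw, gEmb, rconv, σ.mulM_word_eq_append_iff hv, hw]

lemma rconv_word_eq_zero_iff_forall_gComp (a : (List X × G) →₀ K) (u : List X) :
    σ.rconv a (u, 1) = 0 ↔ ∀ w : List X, σ.rconv (gEmb (gComp a w)) (u, 1) = 0 := by
  constructor
  · intro ha w
    ext ⟨v, h⟩
    rcases eq_or_ne v.length u.length with hv | hv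
    · rw [σ.rconv_gEmb_gComp_word_apply a w hv, ha, Finsupp.zero_apply, Finsupp.zero_apply]
    · exact σ.rconv_gEmb_word_apply_eq_zero_of_length_ne _ hv h
  · intro hw
    ext ⟨p, h⟩
    rcases lt_or_ge p.length u.length with hp | hp
    · exact σ.rconv_word_apply_eq_zero_of_length_lt a hp h
    · obtain ⟨w, v, rfl, hv⟩ : ∃ w v : List X, p = w ++ v ∧ v.length = u.length :=
        ⟨p.take (p.length - u.length), p.drop (p.length - u.length),
          (List.take_append_drop _ p).symm, by rw [List.length_drop]; omega⟩
      rw [← σ.rconv_gEmb_gComp_word_apply a w hv, hw, Finsupp.zero_apply, Finsupp.zero_apply]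

lemma singularM_iff (c : (List X × G) →₀ K) :
    σ.SingularM c ↔ ∀ u : List X, ∃ v : List X, σ.rconv c (u ++ v, 1) = 0 := by
  simp only [SingularM, rconv_rconv_word]

lemma rconv_word_append_eq_zero {c : (List X × G) →₀ K} {u : List X}
    (hc : σ.rconv c (u, 1) = 0) (v : List X) : σ.rconv c (u ++ v, 1) = 0 := by
  rw [← rconv_rconv_word, hc, rconv_eq_mapDomain, Finsupp.mapDomain_zero]

lemma exists_forall_mem_rconv_append_eq_zero {ι : Type*} {c : ι → (List X × G) →₀ K}
    {s : Finset ι} (hc : ∀ i ∈ s, σ.SingularM (c i)) (u : List X) :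
    ∃ v : List X, ∀ i ∈ s, σ.rconv (c i) (u ++ v, 1) = 0 := by
  induction s using Finset.cons_induction generalizing u with
  | empty => exact ⟨[], by simp⟩
  | cons j s _ ih =>
    obtain ⟨v₀, hv₀⟩ := (σ.singularM_iff _).1 (hc j (Finset.mem_cons_self j s)) u
    obtain ⟨v₁, hv₁⟩ := ih (fun i hi => hc i (Finset.mem_cons_of_mem hi)) (u ++ v₀)
    refine ⟨v₀ ++ v₁, fun i hi => ?_⟩
    rw [← List.append_assoc]
    rcases Finset.mem_cons.1 hi with rfl | hi
    · exact σ.rconv_word_append_eq_zero hv₀ v₁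
    · exact hv₁ i hi

lemma singularM_iff_forall_gComp (a : (List X × G) →₀ K) :
    σ.SingularM a ↔ ∀ w : List X, σ.SingularM (gEmb (gComp a w)) := by
  classical
  constructor
  · intro ha w
    refine (σ.singularM_iff _).2 fun u => ?_
    obtain ⟨v, hv⟩ := (σ.singularM_iff a).1 ha u
    exact ⟨v, (σ.rconv_word_eq_zero_iff_forall_gComp a _).1 hv w⟩
  · intro hw
    refine (σ.singularM_iff a).2 fun u => ?_
    obtain ⟨v, hv⟩ := σ.exists_forall_mem_rconv_append_eq_zero (s := a.support.image Prod.fst)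
      (fun w _ => hw w) u
    refine ⟨v, (σ.rconv_word_eq_zero_iff_forall_gComp a _).2 fun w => ?_⟩
    by_cases hmem : w ∈ a.support.image Prod.fst
    · exact hv w hmem
    · simp [gComp_eq_zero_of_notMem a hmem, gEmb, rconv]

end SelfSimilarAction

open SelfSimilarAction in
theorem stmt17_general {G X K : Type*} [Group G] [CommRing K]
    (σ : SelfSimilarAction G X)
    (a : (List X × G) →₀ K) :
    (∀ u : List X,
      σ.rconv a (u, 1) = 0 ↔ ∀ w : List X, σ.rconv (gEmb (gComp a w)) (u, 1) = 0) ∧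
    (σ.SingularM a ↔ ∀ w : List X, σ.SingularM (gEmb (gComp a w))) :=
  ⟨σ.rconv_word_eq_zero_iff_forall_gComp a, σ.singularM_iff_forall_gComp a⟩

open SelfSimilarAction in
/-- Let `M = X* G` be the Zappa–Szép monoid of a self-similar action (with `|X| ≥ 2`),
`S` its inverse hull and `K` a commutative ring.  Writing `a ∈ KM` uniquely as
`a = Σ_{w ∈ X*} w a_w` with `a_w ∈ KG`, for each `u ∈ X*` we have `a u = 0` iff
`a_w u = 0` for all `w`; consequently `a` is singular in `K₀S` iff every `a_w` is. -/
theorem stmt17 {G X K : Type*} [Group G] [CommRing K]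
    (σ : SelfSimilarAction G X) (hX : ∃ x y : X, x ≠ y)
    (a : (List X × G) →₀ K) :
    (∀ u : List X,
      σ.rconv a (u, 1) = 0 ↔ ∀ w : List X, σ.rconv (gEmb (gComp a w)) (u, 1) = 0) ∧
    (σ.SingularM a ↔ ∀ w : List X, σ.SingularM (gEmb (gComp a w))) :=
  stmt17_general σ a
end
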